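/- arXiv:2504.17861 — 2 statements merged into one kernel-verified Lean document; each statement's English description precedes it below -/
import Mathlib

section
/- Let C ∈ ℝ^{n₁×n₂×n₃} and D ∈ ℝ^{n₁×l×n₃}, and suppose the equation C⋆X = D is consistent (has at least one solution). Then for any initial tensor X₁ ∈ ℝ^{n₂×l×n₃}, the iteration of Algorithm 2 is well defined as long as the residuals are nonzero (whenever R_k ≠ 0 one has Q_k ≠ 0), and there exists k ≤ n₁·l·n₃ + 1 such that R_k = 0, i.e., C⋆X_k = D; thus Algorithm 2 reaches an exact solution in at most n₁·l·n₃ + 1 iteration steps. -/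
open Matrix Filter Topology

noncomputable section

/-- A third-order real tensor of size `n₁ × n₂ × n₃`, identified with the family of its
frontal slices indexed by `ZMod n₃`. -/
abbrev Tensor (n₁ n₂ n₃ : ℕ) := ZMod n₃ → Matrix (Fin n₁) (Fin n₂) ℝ

/-- The T-product of third-order tensors: `(C ⋆ D)(k) = ∑ j, C (k - j) * D j`. -/
def tProd {n₁ n₂ l n₃ : ℕ} [NeZero n₃] (C : Tensor n₁ n₂ n₃) (D : Tensor n₂ l n₃) :
    Tensor n₁ l n₃ :=
  fun k => ∑ j : ZMod n₃, C (k - j) * D j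

/-- The tensor transpose: `(Cᵀ)(k) = (C (-k))ᵀ`. -/
def tTrans {n₁ n₂ n₃ : ℕ} (C : Tensor n₁ n₂ n₃) : Tensor n₂ n₁ n₃ :=
  fun k => (C (-k))ᵀ

/-- The matrix trace of the first frontal slice of a tensor with square slices. -/
def trFirst {m n₃ : ℕ} (S : Tensor m m n₃) : ℝ :=
  (S 0).trace

/-- The inner product `⟨C, D⟩ = ∑ k i j, C k i j * D k i j`. -/
def tInner {n₁ n₂ n₃ : ℕ} [NeZero n₃] (C D : Tensor n₁ n₂ n₃) : ℝ :=
  ∑ k : ZMod n₃, ∑ i : Fin n₁, ∑ j : Fin n₂, C k i j * D k i j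

/-- The Frobenius norm `‖C‖ = √⟨C, C⟩`. -/
def tNorm {n₁ n₂ n₃ : ℕ} [NeZero n₃] (C : Tensor n₁ n₂ n₃) : ℝ :=
  Real.sqrt (tInner C C)

/-- The block circulant matrix of a tensor: its `(k, l)` block is `C (k - l)`. -/
def bCirc {n n₃ : ℕ} [NeZero n₃] (C : Tensor n n n₃) :
    Matrix (ZMod n₃ × Fin n) (ZMod n₃ × Fin n) ℝ :=
  fun p q => C (p.1 - q.1) p.2 q.2

/-- `C` is T-symmetric positive definite: `Cᵀ = C` and `bCirc C` is positive definite. -/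
def TSymPD {n n₃ : ℕ} [NeZero n₃] (C : Tensor n n n₃) : Prop :=
  tTrans C = C ∧ (bCirc C).PosDef

/-!
Write `E_k = X₀ - X_k` for the error against a solution `X₀`. The step length is chosen so that
`⟨Q_k, E_{k+1}⟩ = 0`; together with `⟨P_k, E_k⟩ = ⟨R_k, C ⋆ E_k⟩ = ‖R_k‖²` this gives
`⟨Q_k, E_k⟩ = ‖R_k‖²`, so `Q_k ≠ 0` whenever `R_k ≠ 0`. While the residuals are nonzero, an
induction shows that the residuals are pairwise orthogonal and so are the directions `Q_k`;
since the space of residuals has dimension `n₁ l n₃`, some `R_k` with `k ≤ n₁ l n₃ + 1` vanishes.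
Only the adjointness of `C ⋆ ·` and `Cᵀ ⋆ ·` enters, so the argument is run in an arbitrary real
inner product space and transported to tensors by flattening them into Euclidean vectors.
-/

open scoped RealInnerProductSpace

section OrthDirIteration

variable {E F : Type*} [NormedAddCommGroup E] [InnerProductSpace ℝ E]
  [NormedAddCommGroup F] [InnerProductSpace ℝ F]

theorem inner_sub_div_norm_sq_smul_self (u v : E) : ⟪v, u - (⟪v, u⟫ / ‖v‖ ^ 2) • v⟫ = 0 := by
  rcases eq_or_ne v 0 with rfl | hv
  · simp
  · rw [inner_sub_right, real_inner_smul_right, real_inner_self_eq_norm_sq,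
      div_mul_cancel₀ _ (by positivity), sub_self]

/-- Algorithm 2 for `A x = b`, indexed from `0`, with `A'` the adjoint of `A`:
`x` are the iterates, `r` the residuals, `p = A' r` and `q` the search directions. -/
structure IsOrthDirIteration (A : E →ₗ[ℝ] F) (A' : F → E) (b : F) (x p q : ℕ → E)
    (r : ℕ → F) : Prop where
  inner_map_left : ∀ u v, ⟪A u, v⟫ = ⟪u, A' v⟫
  residual : ∀ i, r i = b - A (x i)
  gradient : ∀ i, p i = A' (r i)
  direction_zero : q 0 = p 0
  iterate_succ : ∀ i, x (i + 1) = x i + (‖r i‖ ^ 2 / ‖q i‖ ^ 2) • q i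
  direction_succ : ∀ i, q (i + 1) = p (i + 1) - (⟪p (i + 1), q i⟫ / ‖q i‖ ^ 2) • q i

namespace IsOrthDirIteration

variable {A : E →ₗ[ℝ] F} {A' : F → E} {b : F} {x p q : ℕ → E} {r : ℕ → F} {x₀ : E}

theorem residual_succ (h : IsOrthDirIteration A A' b x p q r) (i : ℕ) :
    r (i + 1) = r i - (‖r i‖ ^ 2 / ‖q i‖ ^ 2) • A (q i) := by
  rw [h.residual, h.iterate_succ, map_add, map_smul, sub_add_eq_sub_sub, ← h.residual]

theorem inner_gradient (h : IsOrthDirIteration A A' b x p q r) (u : E) (i : ℕ) :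
    ⟪u, p i⟫ = ⟪A u, r i⟫ := by
  rw [h.gradient, h.inner_map_left]

theorem inner_gradient_error (h : IsOrthDirIteration A A' b x p q r) (hx₀ : A x₀ = b)
    (i : ℕ) : ⟪p i, x₀ - x i⟫ = ‖r i‖ ^ 2 := by
  rw [real_inner_comm, h.inner_gradient, map_sub, hx₀, ← h.residual, real_inner_self_eq_norm_sq]

theorem inner_direction_error (h : IsOrthDirIteration A A' b x p q r) (hx₀ : A x₀ = b)
    (i : ℕ) : ⟪q i, x₀ - x i⟫ = ‖r i‖ ^ 2 := by
  induction i with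
  | zero => rw [h.direction_zero, h.inner_gradient_error hx₀]
  | succ i ih =>
    -- the step along `q i` makes the error orthogonal to `q i`
    have hqi : ⟪q i, x₀ - x (i + 1)⟫ = 0 := by
      rw [h.iterate_succ, sub_add_eq_sub_sub, ← ih]
      exact inner_sub_div_norm_sq_smul_self _ _
    rw [h.direction_succ, inner_sub_left, real_inner_smul_left, hqi, mul_zero, sub_zero,
      h.inner_gradient_error hx₀]

theorem direction_ne_zero (h : IsOrthDirIteration A A' b x p q r) (hx₀ : A x₀ = b) {i : ℕ}
    (hr : r i ≠ 0) : q i ≠ 0 := by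
  rintro hq
  have := h.inner_direction_error hx₀ i
  rw [hq, inner_zero_left, eq_comm] at this
  exact hr (by simpa using this)

theorem inner_gradient_direction (h : IsOrthDirIteration A A' b x p q r) {i n : ℕ}
    (hqq : ∀ j < n, ⟪q j, q n⟫ = 0) (hi : i ≤ n) : ⟪p i, q n⟫ = ⟪q i, q n⟫ := by
  cases i with
  | zero => rw [h.direction_zero]
  | succ m =>
    rw [← eq_sub_iff_add_eq.mp (h.direction_succ m), inner_add_left, real_inner_smul_left,
      hqq m (by omega), mul_zero, add_zero]

theorem inner_residual_succ_eq_zero (h : IsOrthDirIteration A A' b x p q r) {i n : ℕ}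
    (hqn : q n ≠ 0) (hrr : ∀ j < n, ⟪r j, r n⟫ = 0) (hqq : ∀ j < n, ⟪q j, q n⟫ = 0)
    (hi : i ≤ n) : ⟪r i, r (n + 1)⟫ = 0 := by
  rw [h.residual_succ, inner_sub_right, real_inner_smul_right, real_inner_comm (A _),
    ← h.inner_gradient, real_inner_comm (p i), h.inner_gradient_direction hqq hi]
  rcases hi.lt_or_eq with hi | rfl
  · rw [hrr i hi, hqq i hi, mul_zero, sub_zero]
  · rw [real_inner_self_eq_norm_sq, real_inner_self_eq_norm_sq,
      div_mul_cancel₀ _ (by positivity), sub_self]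

theorem inner_direction_succ_eq_zero (h : IsOrthDirIteration A A' b x p q r) {i n : ℕ}
    (hri : r i ≠ 0) (hqi : q i ≠ 0) (hqq : ∀ j < n, ⟪q j, q n⟫ = 0)
    (hrr : ∀ j ≤ n, ⟪r j, r (n + 1)⟫ = 0) (hi : i ≤ n) : ⟪q i, q (n + 1)⟫ = 0 := by
  rcases hi.lt_or_eq with hi | rfl
  · rw [h.direction_succ, inner_sub_right, real_inner_smul_right, hqq i hi, mul_zero,
      sub_zero, h.inner_gradient]
    -- `A (q i)` is a nonzero multiple of `r i - r (i + 1)`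
    have hα : ‖r i‖ ^ 2 / ‖q i‖ ^ 2 ≠ 0 := by positivity
    have hAq : (‖r i‖ ^ 2 / ‖q i‖ ^ 2) • A (q i) = r i - r (i + 1) := by
      rw [h.residual_succ, sub_sub_cancel]
    have := congrArg (⟪·, r (n + 1)⟫) hAq
    simp only [real_inner_smul_left, inner_sub_left, hrr i hi.le, hrr (i + 1) hi,
      sub_zero] at this
    exact (mul_eq_zero.mp this).resolve_left hα
  · rw [h.direction_succ, real_inner_comm (q i)]
    exact inner_sub_div_norm_sq_smul_self _ _

theorem orthogonal_of_residual_ne_zero (h : IsOrthDirIteration A A' b x p q r) (hx₀ : A x₀ = b)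
    {n : ℕ} (hr : ∀ i ≤ n, r i ≠ 0) :
    ∀ j ≤ n, ∀ i < j, ⟪r i, r j⟫ = 0 ∧ ⟪q i, q j⟫ = 0 := by
  induction n with
  | zero => intro j hj i hi; omega
  | succ n ih =>
    have ih := ih fun i hi => hr i (by omega)
    have hrr : ∀ i ≤ n, ⟪r i, r (n + 1)⟫ = 0 := fun i hi =>
      h.inner_residual_succ_eq_zero (h.direction_ne_zero hx₀ (hr n (by omega)))
        (fun j hj => (ih n le_rfl j hj).1) (fun j hj => (ih n le_rfl j hj).2) hi
    intro j hj i hi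
    rcases hj.lt_or_eq with hj | rfl
    · exact ih j (by omega) i hi
    · exact ⟨hrr i (by omega), h.inner_direction_succ_eq_zero (hr i (by omega))
        (h.direction_ne_zero hx₀ (hr i (by omega))) (fun j hj => (ih n le_rfl j hj).2) hrr
        (by omega)⟩

theorem exists_residual_eq_zero [FiniteDimensional ℝ F] (h : IsOrthDirIteration A A' b x p q r)
    (hx₀ : A x₀ = b) : ∃ k ≤ Module.finrank ℝ F, r k = 0 := by
  by_contra! hr
  have horth := h.orthogonal_of_residual_ne_zero hx₀ hr
  have hli : LinearIndependent ℝ fun i : Fin (Module.finrank ℝ F + 1) => r i := by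
    refine linearIndependent_of_ne_zero_of_inner_eq_zero (fun i => hr i (by omega)) ?_
    intro i j hij
    rcases lt_or_gt_of_ne (Fin.val_ne_of_ne hij) with hij | hij
    · exact (horth j (by omega) i hij).1
    · rw [real_inner_comm]
      exact (horth i (by omega) j hij).1
  simpa using hli.fintype_card_le_finrank

end IsOrthDirIteration

end OrthDirIteration

section Tensor

variable {n₁ n₂ l n₃ : ℕ} [NeZero n₃]

def tProdLinear (C : Tensor n₁ n₂ n₃) : Tensor n₂ l n₃ →ₗ[ℝ] Tensor n₁ l n₃ where
  toFun := tProd C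
  map_add' X Y := by
    funext k
    simp only [tProd, Pi.add_apply, Matrix.mul_add, Finset.sum_add_distrib]
  map_smul' c X := by
    funext k
    simp only [tProd, Pi.smul_apply, Matrix.mul_smul, Finset.smul_sum, RingHom.id_apply]

def tensorEuclideanEquiv (n₁ n₂ n₃ : ℕ) :
    Tensor n₁ n₂ n₃ ≃ₗ[ℝ] EuclideanSpace ℝ (ZMod n₃ × Fin n₁ × Fin n₂) where
  toFun A := WithLp.toLp 2 fun p => A p.1 p.2.1 p.2.2
  invFun v k := Matrix.of fun i j => v (k, i, j)
  map_add' _ _ := rfl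
  map_smul' _ _ := rfl
  left_inv _ := rfl
  right_inv _ := rfl

theorem inner_tensorEuclideanEquiv (A B : Tensor n₁ n₂ n₃) :
    ⟪tensorEuclideanEquiv n₁ n₂ n₃ A, tensorEuclideanEquiv n₁ n₂ n₃ B⟫ = tInner A B := by
  simp only [PiLp.inner_apply, Fintype.sum_prod_type, RCLike.inner_apply, conj_trivial, tInner]
  exact Finset.sum_congr rfl fun _ _ => Finset.sum_congr rfl fun _ _ =>
    Finset.sum_congr rfl fun _ _ => mul_comm _ _

theorem norm_sq_tensorEuclideanEquiv (A : Tensor n₁ n₂ n₃) :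
    ‖tensorEuclideanEquiv n₁ n₂ n₃ A‖ ^ 2 = tInner A A := by
  rw [← real_inner_self_eq_norm_sq, inner_tensorEuclideanEquiv]

theorem finrank_euclidean_tensor :
    Module.finrank ℝ (EuclideanSpace ℝ (ZMod n₃ × Fin n₁ × Fin n₂)) = n₁ * n₂ * n₃ := by
  rw [finrank_euclideanSpace, Fintype.card_prod, Fintype.card_prod, ZMod.card,
    Fintype.card_fin, Fintype.card_fin]
  ring

theorem tInner_eq_sum_trace (A B : Tensor n₁ n₂ n₃) :
    tInner A B = ∑ k, ((A k)ᵀ * B k).trace := by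
  refine Finset.sum_congr rfl fun k _ => ?_
  simp only [Matrix.trace, Matrix.diag, Matrix.mul_apply, Matrix.transpose_apply]
  exact Finset.sum_comm

theorem tInner_tProd_left (C : Tensor n₁ n₂ n₃) (Z : Tensor n₂ l n₃) (Y : Tensor n₁ l n₃) :
    tInner (tProd C Z) Y = tInner Z (tProd (tTrans C) Y) := by
  simp only [tInner_eq_sum_trace, tProd, tTrans, Matrix.transpose_sum, Matrix.transpose_mul,
    Matrix.sum_mul, Matrix.mul_sum, Matrix.trace_sum, Matrix.mul_assoc, neg_sub]
  exact Finset.sum_comm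

theorem trFirst_tProd_tTrans (A B : Tensor n₁ n₂ n₃) :
    trFirst (tProd (tTrans A) B) = tInner A B := by
  simp [tInner_eq_sum_trace, trFirst, tProd, tTrans, Matrix.trace_sum]

end Tensor

theorem isOrthDirIteration_of_tensor {n₁ n₂ l n₃ : ℕ} [NeZero n₃] {C : Tensor n₁ n₂ n₃}
    {D : Tensor n₁ l n₃} {X : ℕ → Tensor n₂ l n₃} {R : ℕ → Tensor n₁ l n₃}
    {P Q : ℕ → Tensor n₂ l n₃}
    (hR : ∀ i, 1 ≤ i → R i = D - tProd C (X i))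
    (hP : ∀ i, 1 ≤ i → P i = tProd (tTrans C) (R i))
    (hQ1 : Q 1 = P 1)
    (hX : ∀ i, 1 ≤ i → X (i + 1) = X i +
      (tInner (R i) (R i) / tInner (Q i) (Q i)) • Q i)
    (hQ : ∀ i, 1 ≤ i → Q (i + 1) = P (i + 1) -
      (trFirst (tProd (tTrans (P (i + 1))) (Q i)) / tInner (Q i) (Q i)) • Q i) :
    IsOrthDirIteration
      ((tensorEuclideanEquiv n₂ l n₃).arrowCongr (tensorEuclideanEquiv n₁ l n₃) (tProdLinear C))
      (tensorEuclideanEquiv n₂ l n₃ ∘ tProd (tTrans C) ∘ (tensorEuclideanEquiv n₁ l n₃).symm)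
      (tensorEuclideanEquiv n₁ l n₃ D) (fun i => tensorEuclideanEquiv n₂ l n₃ (X (i + 1)))
      (fun i => tensorEuclideanEquiv n₂ l n₃ (P (i + 1)))
      (fun i => tensorEuclideanEquiv n₂ l n₃ (Q (i + 1)))
      (fun i => tensorEuclideanEquiv n₁ l n₃ (R (i + 1))) where
  inner_map_left u v := by
    obtain ⟨U, rfl⟩ := (tensorEuclideanEquiv n₂ l n₃).surjective u
    obtain ⟨V, rfl⟩ := (tensorEuclideanEquiv n₁ l n₃).surjective v
    simp [inner_tensorEuclideanEquiv, tInner_tProd_left, tProdLinear]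
  residual i := by simp [hR (i + 1) (by omega), tProdLinear]
  gradient i := by simp [hP (i + 1) (by omega)]
  direction_zero := by simp [hQ1]
  iterate_succ i := by
    simp only [hX (i + 1) (by omega), map_add, map_smul, norm_sq_tensorEuclideanEquiv]
  direction_succ i := by
    simp only [hQ (i + 1) (by omega), map_sub, map_smul, norm_sq_tensorEuclideanEquiv,
      inner_tensorEuclideanEquiv, trFirst_tProd_tTrans]

theorem stmt_10 (n₁ n₂ l n₃ : ℕ) [NeZero n₃] (C : Tensor n₁ n₂ n₃)
    (D : Tensor n₁ l n₃) (hcons : ∃ X₀ : Tensor n₂ l n₃, tProd C X₀ = D)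
    (X : ℕ → Tensor n₂ l n₃) (R : ℕ → Tensor n₁ l n₃)
    (P Q : ℕ → Tensor n₂ l n₃)
    (hR : ∀ i, 1 ≤ i → R i = D - tProd C (X i))
    (hP : ∀ i, 1 ≤ i → P i = tProd (tTrans C) (R i))
    (hQ1 : Q 1 = P 1)
    (hX : ∀ i, 1 ≤ i → X (i + 1) = X i +
      (tInner (R i) (R i) / tInner (Q i) (Q i)) • Q i)
    (hQ : ∀ i, 1 ≤ i → Q (i + 1) = P (i + 1) -
      (trFirst (tProd (tTrans (P (i + 1))) (Q i)) / tInner (Q i) (Q i)) • Q i)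
    :
    (∀ k, 1 ≤ k → R k ≠ 0 → Q k ≠ 0) ∧
    ∃ k, 1 ≤ k ∧ k ≤ n₁ * l * n₃ + 1 ∧ R k = 0 ∧ tProd C (X k) = D := by
  obtain ⟨X₀, hX₀⟩ := hcons
  have h := isOrthDirIteration_of_tensor hR hP hQ1 hX hQ
  have hsol : (tensorEuclideanEquiv n₂ l n₃).arrowCongr (tensorEuclideanEquiv n₁ l n₃)
      (tProdLinear C) (tensorEuclideanEquiv n₂ l n₃ X₀) = tensorEuclideanEquiv n₁ l n₃ D := by
    simp [tProdLinear, hX₀]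
  refine ⟨fun k hk hRk => ?_, ?_⟩
  · obtain ⟨i, rfl⟩ := Nat.exists_eq_add_of_le' hk
    simpa using h.direction_ne_zero hsol (i := i) (by simpa using hRk)
  · obtain ⟨k, hk, hRk⟩ := h.exists_residual_eq_zero hsol
    rw [finrank_euclidean_tensor] at hk
    replace hRk : R (k + 1) = 0 := by simpa using hRk
    refine ⟨k + 1, by omega, by omega, hRk, ?_⟩
    exact (sub_eq_zero.mp ((hR _ (by omega)).symm.trans hRk)).symm
end
end

section
/- Let C ∈ ℝ^{n₁×n₂×n₃} and D ∈ ℝ^{n₁×l×n₃}. A tensor X̃ ∈ ℝ^{n₂×l×n₃} minimizes ‖C⋆X − D‖ over all X ∈ ℝ^{n₂×l×n₃} if and only if Cᵀ⋆C⋆X̃ = Cᵀ⋆D; that is, the set of least-squares solutions of C⋆X = D coincides with the solution set of the (consistent) normal equation Cᵀ⋆C⋆X = Cᵀ⋆D. -/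
open Matrix Filter Topology

noncomputable section

lemma sum_swap5 {α β γ δ ε : Type*} [Fintype α] [Fintype β] [Fintype γ] [Fintype δ] [Fintype ε]
    (f : α → β → γ → δ → ε → ℝ) :
    (∑ k : α, ∑ i : γ, ∑ j : ε, ∑ m : β, ∑ p : δ, f k m i p j)
      = ∑ m : β, ∑ p : δ, ∑ j : ε, ∑ k : α, ∑ i : γ, f k m i p j := by
  calc (∑ k : α, ∑ i : γ, ∑ j : ε, ∑ m : β, ∑ p : δ, f k m i p j)
      = ∑ k : α, ∑ i : γ, ∑ m : β, ∑ j : ε, ∑ p : δ, f k m i p j :=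
        Finset.sum_congr rfl fun k _ => Finset.sum_congr rfl fun i _ => Finset.sum_comm
    _ = ∑ k : α, ∑ m : β, ∑ i : γ, ∑ j : ε, ∑ p : δ, f k m i p j :=
        Finset.sum_congr rfl fun k _ => Finset.sum_comm
    _ = ∑ m : β, ∑ k : α, ∑ i : γ, ∑ j : ε, ∑ p : δ, f k m i p j := Finset.sum_comm
    _ = ∑ m : β, ∑ k : α, ∑ i : γ, ∑ p : δ, ∑ j : ε, f k m i p j :=
        Finset.sum_congr rfl fun m _ => Finset.sum_congr rfl fun k _ =>
          Finset.sum_congr rfl fun i _ => Finset.sum_comm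
    _ = ∑ m : β, ∑ k : α, ∑ p : δ, ∑ i : γ, ∑ j : ε, f k m i p j :=
        Finset.sum_congr rfl fun m _ => Finset.sum_congr rfl fun k _ => Finset.sum_comm
    _ = ∑ m : β, ∑ p : δ, ∑ k : α, ∑ i : γ, ∑ j : ε, f k m i p j :=
        Finset.sum_congr rfl fun m _ => Finset.sum_comm
    _ = ∑ m : β, ∑ p : δ, ∑ k : α, ∑ j : ε, ∑ i : γ, f k m i p j :=
        Finset.sum_congr rfl fun m _ => Finset.sum_congr rfl fun p _ =>
          Finset.sum_congr rfl fun k _ => Finset.sum_comm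
    _ = ∑ m : β, ∑ p : δ, ∑ j : ε, ∑ k : α, ∑ i : γ, f k m i p j :=
        Finset.sum_congr rfl fun m _ => Finset.sum_congr rfl fun p _ => Finset.sum_comm

variable {n₁ n₂ l n₃ : ℕ} [NeZero n₃]

lemma tProd_sub (C : Tensor n₁ n₂ n₃) (X Y : Tensor n₂ l n₃) :
    tProd C (X - Y) = tProd C X - tProd C Y := by
  funext k
  simp [tProd, Matrix.mul_sub, Finset.sum_sub_distrib]

lemma tProd_add (C : Tensor n₁ n₂ n₃) (X Y : Tensor n₂ l n₃) :
    tProd C (X + Y) = tProd C X + tProd C Y := by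
  funext k
  simp [tProd, Matrix.mul_add, Finset.sum_add_distrib]

lemma tProd_smul (C : Tensor n₁ n₂ n₃) (t : ℝ) (X : Tensor n₂ l n₃) :
    tProd C (t • X) = t • tProd C X := by
  funext k
  simp [tProd, Matrix.mul_smul, Finset.smul_sum]

lemma tInner_comm (C D : Tensor n₁ n₂ n₃) : tInner C D = tInner D C := by
  simp [tInner, mul_comm]

lemma tInner_add_left (C D E : Tensor n₁ n₂ n₃) :
    tInner (C + D) E = tInner C E + tInner D E := by
  simp [tInner, add_mul, Finset.sum_add_distrib]

lemma tInner_smul_left (t : ℝ) (C D : Tensor n₁ n₂ n₃) :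
    tInner (t • C) D = t * tInner C D := by
  simp [tInner, Finset.mul_sum, mul_assoc]

lemma tInner_self_nonneg (C : Tensor n₁ n₂ n₃) : 0 ≤ tInner C C := by
  refine Finset.sum_nonneg fun k _ => Finset.sum_nonneg fun i _ =>
    Finset.sum_nonneg fun j _ => mul_self_nonneg _

lemma tInner_self_eq_zero {C : Tensor n₁ n₂ n₃} (h : tInner C C = 0) : C = 0 := by
  have h' : ∑ p : ZMod n₃ × Fin n₁ × Fin n₂, C p.1 p.2.1 p.2.2 * C p.1 p.2.1 p.2.2 = 0 := by
    rw [Fintype.sum_prod_type]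
    simp only [Fintype.sum_prod_type]
    simpa [tInner] using h
  have := (Finset.sum_eq_zero_iff_of_nonneg (fun p _ => mul_self_nonneg _)).mp h'
  funext k
  ext i j
  simpa [mul_self_eq_zero] using this (k, i, j) (Finset.mem_univ _)

lemma tInner_adj' (C : Tensor n₁ n₂ n₃) (X : Tensor n₂ l n₃) (Y : Tensor n₁ l n₃) :
    tInner (tProd C X) Y = tInner X (tProd (tTrans C) Y) := by
  calc tInner (tProd C X) Y
      = ∑ k : ZMod n₃, ∑ i : Fin n₁, ∑ j : Fin l, ∑ m : ZMod n₃, ∑ p : Fin n₂,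
          C (k - m) i p * X m p j * Y k i j := by
        simp only [tInner, tProd, Matrix.sum_apply, Matrix.mul_apply, Finset.sum_mul]
    _ = ∑ m : ZMod n₃, ∑ p : Fin n₂, ∑ j : Fin l, ∑ k : ZMod n₃, ∑ i : Fin n₁,
          C (k - m) i p * X m p j * Y k i j :=
        sum_swap5 (fun k m i p j => C (k - m) i p * X m p j * Y k i j)
    _ = tInner X (tProd (tTrans C) Y) := by
        simp only [tInner, tProd, tTrans, Matrix.sum_apply, Matrix.mul_apply,
          Matrix.transpose_apply, Finset.mul_sum, neg_sub]
        refine Finset.sum_congr rfl fun m _ => Finset.sum_congr rfl fun p _ =>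
          Finset.sum_congr rfl fun j _ => Finset.sum_congr rfl fun k _ =>
          Finset.sum_congr rfl fun i _ => by ring

lemma tInner_add_right (C D E : Tensor n₁ n₂ n₃) :
    tInner C (D + E) = tInner C D + tInner C E := by
  rw [tInner_comm, tInner_add_left, tInner_comm D C, tInner_comm E C]

lemma tInner_expand (A B : Tensor n₁ n₂ n₃) :
    tInner (A + B) (A + B) = tInner A A + 2 * tInner A B + tInner B B := by
  rw [tInner_add_left, tInner_add_right, tInner_add_right, tInner_comm B A]; ring

lemma tInner_zero_right (C : Tensor n₁ n₂ n₃) : tInner C (0 : Tensor n₁ n₂ n₃) = 0 := by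
  simp [tInner]


theorem stmt_16 (n₁ n₂ l n₃ : ℕ) [NeZero n₃] (C : Tensor n₁ n₂ n₃)
    (D : Tensor n₁ l n₃) (Xt : Tensor n₂ l n₃) :
    (∀ X : Tensor n₂ l n₃, tNorm (tProd C Xt - D) ≤ tNorm (tProd C X - D)) ↔
      tProd (tTrans C) (tProd C Xt) = tProd (tTrans C) D := by
  set R : Tensor n₁ l n₃ := tProd C Xt - D with hR
  set N : Tensor n₂ l n₃ := tProd (tTrans C) R with hN
  have hNeq : (tProd (tTrans C) (tProd C Xt) = tProd (tTrans C) D) ↔ N = 0 := by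
    rw [hN, hR, tProd_sub, sub_eq_zero]
  rw [hNeq]
  have hdecomp : ∀ X : Tensor n₂ l n₃, tProd C X - D = R + tProd C (X - Xt) := by
    intro X
    rw [tProd_sub, hR]; abel
  constructor
  · intro hmin
    -- show all directional derivatives vanish
    have key : ∀ Z : Tensor n₂ l n₃, tInner Z N = 0 := by
      intro Z
      set P : Tensor n₁ l n₃ := tProd C Z with hP
      have hb : 0 ≤ tInner P P := tInner_self_nonneg P
      have hineq : ∀ t : ℝ, 0 ≤ 2 * (t * tInner P R) + t ^ 2 * tInner P P := by
        intro t
        have h1 := hmin (Xt + t • Z)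
        rw [hdecomp (Xt + t • Z)] at h1
        have h2 : Xt + t • Z - Xt = t • Z := by abel
        rw [h2, tProd_smul, ← hP] at h1
        rw [tNorm, tNorm] at h1
        have h3 : tInner R R ≤ tInner (R + t • P) (R + t • P) :=
          (Real.sqrt_le_sqrt_iff (tInner_self_nonneg (R + t • P))).mp h1
        rw [tInner_expand, tInner_comm R (t • P), tInner_smul_left] at h3
        have h4 : tInner (t • P) (t • P) = t ^ 2 * tInner P P := by
          rw [tInner_smul_left, tInner_comm, tInner_smul_left]; ring
        rw [h4] at h3
        linarith
      set a : ℝ := tInner P R with ha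
      have hb1 : (0:ℝ) < tInner P P + 1 := by linarith
      set t : ℝ := -a / (tInner P P + 1) with htdef
      have hA : a = -(t * (tInner P P + 1)) := by
        rw [htdef, div_mul_cancel₀ _ (ne_of_gt hb1)]; ring
      have h5 := hineq t
      rw [hA] at h5
      have ht2 : t ^ 2 * (tInner P P + 2) ≤ 0 := by nlinarith [h5]
      have ht0 : t = 0 := by nlinarith [sq_nonneg t]
      have ha0 : a = 0 := by rw [hA, ht0]; ring
      rw [hN, ← tInner_adj' C Z R, ← hP, ← ha]
      exact ha0
    have : tInner N N = 0 := key N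
    exact tInner_self_eq_zero this
  · intro hN0 X
    rw [hdecomp X]
    set P : Tensor n₁ l n₃ := tProd C (X - Xt) with hP
    have hcross : tInner R P = 0 := by
      rw [tInner_comm, hP, tInner_adj' C (X - Xt) R, ← hN, hN0, tInner_zero_right]
    have : tInner R R ≤ tInner (R + P) (R + P) := by
      rw [tInner_expand, hcross]
      have := tInner_self_nonneg P
      linarith
    exact Real.sqrt_le_sqrt this
end
end
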